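/- Let x, y be real numbers with 0 < x < 1 and suppose that ζ(x+iy) = 0, where ζ is the Riemann zeta function. Then for every real a > 0 the series Σ_{k=1}^∞ (−1)^{k−1} k^{−x} cos(y·log(a·k)) converges to 0, and for every real b > 0 the series Σ_{k=1}^∞ (−1)^{k−1} k^{−x} sin(y·log(b·k)) converges to 0 (with the convention (−1)^0 = 1). -/

import Mathlib

/-!
Pair the terms of the alternating series: by the mean value theorem
`(2j+1)^(-s) - (2j+2)^(-s) = O(|s| j^(-Re s - 1))`, so the paired series converges locally
uniformly on `Re s > 0` to a holomorphic function, and since the single terms tend to `0` the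
partial sums of `∑ (-1)^(k-1) k^(-s)` converge to it. For `Re s > 1` the limit is the L-function
of a mean-zero function on `ZMod 2`, which is entire, and it equals `(1 - 2^(1-s)) ζ(s)` there
(split off the even terms). Two applications of the identity theorem show that the partial sums
tend to `(1 - 2^(1-s)) ζ(s)` on all of `Re s > 0`, hence to `0` at a zero `s = x + iy`.
Multiplying by `a^(-iy)` turns the `k`-th term into `(-1)^(k-1) k^(-x) e^(-iy log(ak))`, whose
real part and minus imaginary part are the two series of the statement.
-/

open Filter Finset

open Complex LSeries Topology

theorem Filter.tendsto_of_tendsto_two_mul_of_tendsto_two_mul_add_one {α : Type*} {l : Filter α}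
    {u : ℕ → α} (heven : Tendsto (fun m ↦ u (2 * m)) atTop l)
    (hodd : Tendsto (fun m ↦ u (2 * m + 1)) atTop l) : Tendsto u atTop l := by
  rw [tendsto_atTop'] at heven hodd ⊢
  intro s hs
  obtain ⟨a, ha⟩ := heven s hs
  obtain ⟨b, hb⟩ := hodd s hs
  refine ⟨2 * (a + b), fun n hn ↦ ?_⟩
  obtain ⟨m, rfl | rfl⟩ := Nat.even_or_odd' n
  · exact ha m (by omega)
  · exact hb m (by omega)

theorem norm_ofReal_cpow_neg_sub_le {s : ℂ} (hs : -1 ≤ s.re) {a b : ℝ} (ha : 0 < a)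
    (hab : a ≤ b) :
    ‖(a : ℂ) ^ (-s) - (b : ℂ) ^ (-s)‖ ≤ ‖s‖ * a ^ (-s.re - 1) * (b - a) := by
  rcases eq_or_ne s 0 with rfl | hs0
  · simp
  have hderiv : ∀ t ∈ Set.Icc a b, HasDerivWithinAt (fun u : ℝ ↦ (u : ℂ) ^ (-s))
      (-s * (t : ℂ) ^ (-s - 1)) (Set.Icc a b) t := fun t ht ↦
    (hasDerivAt_ofReal_cpow_const (ha.trans_le ht.1).ne' (neg_ne_zero.mpr hs0)).hasDerivWithinAt
  have hbound :
      ∀ t ∈ Set.Icc a b, ‖-s * (t : ℂ) ^ (-s - 1)‖ ≤ ‖s‖ * a ^ (-s.re - 1) := by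
    intro t ht
    rw [norm_mul, norm_neg, norm_cpow_eq_rpow_re_of_pos (ha.trans_le ht.1)]
    gcongr
    · simp only [sub_re, neg_re, one_re]
      exact Real.rpow_le_rpow_of_nonpos ha ht.1 (by linarith)
  have := (convex_Icc a b).norm_image_sub_le_of_norm_hasDerivWithin_le hderiv hbound
    (Set.left_mem_Icc.mpr hab) (Set.right_mem_Icc.mpr hab)
  rwa [norm_sub_rev, Real.norm_of_nonneg (sub_nonneg.mpr hab)] at this

theorem summable_nat_add_one_rpow {p : ℝ} (hp : p < -1) :
    Summable fun n : ℕ ↦ ((n : ℝ) + 1) ^ p := by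
  simpa using (summable_nat_add_iff 1).mpr (Real.summable_nat_rpow.mpr hp)

theorem LSeries.sum_range_succ_term_eq_sum_Icc (f : ℕ → ℂ) (s : ℂ) (n : ℕ) :
    ∑ k ∈ range (n + 1), term f s k = ∑ k ∈ Icc 1 n, term f s k := by
  have hsub : Icc 1 n ⊆ range (n + 1) := by
    intro k
    simp only [mem_Icc, mem_range]
    omega
  refine (sum_subset hsub fun k hk hk' ↦ ?_).symm
  obtain rfl : k = 0 := by
    simp only [mem_range, mem_Icc, not_and, not_le] at hk hk'
    omega
  exact term_zero f s

theorem ofReal_cpow_neg_mul_I {t : ℝ} (ht : 0 < t) (y : ℝ) :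
    (t : ℂ) ^ (-(y * I)) = exp ((-(y * Real.log t) : ℝ) * I) := by
  rw [cpow_def_of_ne_zero (ofReal_ne_zero.mpr ht.ne'), ← ofReal_log ht.le]
  push_cast
  ring_nf

/-- Equal to `(-1) ^ (k - 1)` for `k ≠ 0`, but `2`-periodic also at `k = 0`, where `k - 1`
truncates. -/
def altSign (k : ℕ) : ℂ := -(-1) ^ k

noncomputable def dirichletEta : ℂ → ℂ := ZMod.LFunction fun j : ZMod 2 ↦ altSign j.val

theorem differentiable_dirichletEta : Differentiable ℂ dirichletEta :=
  ZMod.differentiable_LFunction_of_sum_zero <| by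
    rw [show (univ : Finset (ZMod 2)) = {0, 1} from rfl]
    simp [altSign, show ZMod.val (1 : ZMod 2) = 1 from rfl]

theorem dirichletEta_eq_LSeries {s : ℂ} (hs : 1 < s.re) : dirichletEta s = LSeries altSign s := by
  rw [dirichletEta, ZMod.LFunction_eq_LSeries _ hs]
  congr 1 with k
  rw [ZMod.val_natCast, altSign, altSign, neg_one_pow_eq_pow_mod_two (n := k)]

theorem tendsto_sum_range_term_altSign_of_one_lt_re {s : ℂ} (hs : 1 < s.re) :
    Tendsto (fun n ↦ ∑ k ∈ range n, term altSign s k) atTop (𝓝 (dirichletEta s)) := by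
  have hsum : LSeriesSummable altSign s :=
    LSeriesSummable_of_bounded_of_one_lt_re (m := 1) (fun n _ ↦ by simp [altSign]) hs
  rw [dirichletEta_eq_LSeries hs]
  exact hsum.LSeriesHasSum.tendsto_sum_nat

theorem term_altSign_add_term_altSign (s : ℂ) (n : ℕ) :
    term altSign s (2 * n) + term altSign s (2 * n + 1) =
      term 1 s (2 * n) + term 1 s (2 * n + 1) - 2 ^ (1 - s) * term 1 s n := by
  rcases eq_or_ne n 0 with rfl | hn
  · simp [altSign]
  have h2 : (2 : ℂ) ^ (1 - s) = 2 / 2 ^ s := by rw [cpow_sub _ _ two_ne_zero, cpow_one]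
  have h2n : ((2 * n : ℕ) : ℂ) ^ s = 2 ^ s * n ^ s := by
    rw [Nat.cast_mul, natCast_mul_natCast_cpow, Nat.cast_ofNat]
  have : (2 : ℂ) ^ s ≠ 0 := by simp
  have : (n : ℂ) ^ s ≠ 0 := by simp [hn]
  simp only [term_of_ne_zero (show 2 * n ≠ 0 by omega), term_of_ne_zero hn,
    term_of_ne_zero (Nat.succ_ne_zero _), altSign, Pi.one_apply, h2, h2n, pow_succ, pow_mul]
  field_simp
  ring

theorem sum_range_two_mul_term_altSign (s : ℂ) (n : ℕ) :
    ∑ k ∈ range (2 * n), term altSign s k =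
      ∑ k ∈ range (2 * n), term 1 s k - 2 ^ (1 - s) * ∑ k ∈ range n, term 1 s k := by
  induction n with
  | zero => simp
  | succ n ih =>
    rw [show 2 * (n + 1) = 2 * n + 1 + 1 by ring, sum_range_succ, sum_range_succ, ih,
      sum_range_succ, sum_range_succ, sum_range_succ, mul_add]
    linear_combination term_altSign_add_term_altSign s n

theorem dirichletEta_eq_mul_riemannZeta_of_one_lt_re {s : ℂ} (hs : 1 < s.re) :
    dirichletEta s = (1 - 2 ^ (1 - s)) * riemannZeta s := by
  have hζ := (LSeriesHasSum_one hs).tendsto_sum_nat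
  have h2 : Tendsto (2 * ·) atTop atTop := tendsto_id.const_mul_atTop' two_pos
  refine tendsto_nhds_unique ((tendsto_sum_range_term_altSign_of_one_lt_re hs).comp h2) ?_
  simp_rw [Function.comp_def, sum_range_two_mul_term_altSign, sub_mul, one_mul]
  exact (hζ.comp h2).sub (hζ.const_mul _)

theorem dirichletEta_eq_mul_riemannZeta {s : ℂ} (hs : s ≠ 1) :
    dirichletEta s = (1 - 2 ^ (1 - s)) * riemannZeta s := by
  have hη : AnalyticOnNhd ℂ dirichletEta {1}ᶜ :=
    fun z _ ↦ differentiable_dirichletEta.analyticAt z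
  have hζ : AnalyticOnNhd ℂ (fun s ↦ (1 - 2 ^ (1 - s)) * riemannZeta s) {1}ᶜ :=
    fun z hz ↦ (by fun_prop (disch := norm_num [slitPlane]) :
      AnalyticAt ℂ (fun s : ℂ ↦ (1 : ℂ) - (2 : ℂ) ^ (1 - s)) z).mul
        (analyticOn_riemannZeta z hz)
  have heq : dirichletEta =ᶠ[𝓝 2] fun s ↦ (1 - 2 ^ (1 - s)) * riemannZeta s := by
    filter_upwards [(isOpen_lt continuous_const continuous_re).mem_nhds
      (show (1 : ℝ) < (2 : ℂ).re by norm_num)] with z hz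
    using dirichletEta_eq_mul_riemannZeta_of_one_lt_re hz
  exact hη.eqOn_of_preconnected_of_eventuallyEq hζ
    (isConnected_compl_singleton_of_one_lt_rank (by simp) 1).isPreconnected
    (by norm_num : (2 : ℂ) ∈ ({1}ᶜ : Set ℂ)) heq hs

noncomputable def pairedEtaSeries (s : ℂ) : ℂ :=
  ∑' j : ℕ, (((2 * j + 1 : ℕ) : ℂ) ^ (-s) - ((2 * j + 2 : ℕ) : ℂ) ^ (-s))

theorem sum_range_two_mul_add_one_term_altSign (s : ℂ) (m : ℕ) :
    ∑ k ∈ range (2 * m + 1), term altSign s k =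
      ∑ j ∈ range m, (((2 * j + 1 : ℕ) : ℂ) ^ (-s) - ((2 * j + 2 : ℕ) : ℂ) ^ (-s)) := by
  induction m with
  | zero => simp
  | succ m ih =>
    rw [show 2 * (m + 1) + 1 = 2 * m + 1 + 1 + 1 by ring, sum_range_succ, sum_range_succ, ih,
      sum_range_succ, add_assoc, term_of_ne_zero (by omega), term_of_ne_zero (by omega),
      cpow_neg, cpow_neg]
    simp only [Nat.cast_add, Nat.cast_mul, Nat.cast_ofNat, Nat.cast_one, sum_sub_distrib, altSign,
      pow_succ, pow_mul, pow_zero, mul_neg, mul_one, neg_neg, one_pow, one_div, add_right_inj]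
    ring

theorem norm_cpow_neg_sub_cpow_neg_le {s : ℂ} (hs : -1 ≤ s.re) (j : ℕ) :
    ‖((2 * j + 1 : ℕ) : ℂ) ^ (-s) - ((2 * j + 2 : ℕ) : ℂ) ^ (-s)‖ ≤
      ‖s‖ * ((j : ℝ) + 1) ^ (-s.re - 1) := by
  have h := norm_ofReal_cpow_neg_sub_le hs (a := 2 * (j : ℝ) + 1) (b := 2 * (j : ℝ) + 2)
    (by positivity) (by linarith)
  push_cast at h ⊢
  calc _ ≤ ‖s‖ * (2 * (j : ℝ) + 1) ^ (-s.re - 1) * (2 * j + 2 - (2 * j + 1)) := h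
    _ ≤ ‖s‖ * ((j : ℝ) + 1) ^ (-s.re - 1) := by
      rw [show (2 * j + 2 - (2 * j + 1) : ℝ) = 1 by ring, mul_one]
      exact mul_le_mul_of_nonneg_left
        (Real.rpow_le_rpow_of_nonpos (by positivity) (by linarith) (by linarith)) (norm_nonneg s)

theorem summable_cpow_neg_sub_cpow_neg {s : ℂ} (hs : 0 < s.re) :
    Summable fun j : ℕ ↦ ((2 * j + 1 : ℕ) : ℂ) ^ (-s) - ((2 * j + 2 : ℕ) : ℂ) ^ (-s) :=
  .of_norm_bounded ((summable_nat_add_one_rpow (by linarith)).mul_left ‖s‖)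
    (norm_cpow_neg_sub_cpow_neg_le (by linarith))

theorem differentiableOn_pairedEtaSeries :
    DifferentiableOn ℂ pairedEtaSeries {s | 0 < s.re} := by
  intro s₀ (hs₀ : 0 < s₀.re)
  set U := {s : ℂ | s₀.re / 2 < s.re} ∩ Metric.ball 0 (‖s₀‖ + 1)
  have hU : IsOpen U := (isOpen_lt continuous_const continuous_re).inter Metric.isOpen_ball
  have hs₀U : s₀ ∈ U := ⟨show s₀.re / 2 < s₀.re by linarith, by simp⟩
  have hdiff : DifferentiableOn ℂ pairedEtaSeries U := by
    refine differentiableOn_tsum_of_summable_norm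
      (u := fun j : ℕ ↦ (‖s₀‖ + 1) * ((j : ℝ) + 1) ^ (-(s₀.re / 2) - 1))
      ((summable_nat_add_one_rpow (by linarith)).mul_left _)
      (fun j ↦ by fun_prop (disch := simp)) hU fun j s ⟨(hre : s₀.re / 2 < s.re), hs⟩ ↦ ?_
    refine (norm_cpow_neg_sub_cpow_neg_le (by linarith) j).trans ?_
    gcongr
    · exact (mem_ball_zero_iff.mp hs).le
    · simp
  exact (hdiff.differentiableAt (hU.mem_nhds hs₀U)).differentiableWithinAt

theorem tendsto_term_altSign {s : ℂ} (hs : 0 < s.re) :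
    Tendsto (term altSign s) atTop (𝓝 0) := by
  refine squeeze_zero_norm (fun n ↦ ?_)
    ((tendsto_rpow_neg_atTop hs).comp tendsto_natCast_atTop_atTop)
  rw [norm_term_eq]
  split_ifs with hn
  · exact Real.rpow_nonneg (Nat.cast_nonneg n) _
  · simp [altSign, Real.rpow_neg (Nat.cast_nonneg n)]

theorem tendsto_sum_range_term_altSign_pairedEtaSeries {s : ℂ} (hs : 0 < s.re) :
    Tendsto (fun n ↦ ∑ k ∈ range n, term altSign s k) atTop (𝓝 (pairedEtaSeries s)) := by
  have hodd : Tendsto (fun m ↦ ∑ k ∈ range (2 * m + 1), term altSign s k) atTop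
      (𝓝 (pairedEtaSeries s)) := by
    simp_rw [sum_range_two_mul_add_one_term_altSign]
    exact (summable_cpow_neg_sub_cpow_neg hs).hasSum.tendsto_sum_nat
  refine tendsto_of_tendsto_two_mul_of_tendsto_two_mul_add_one ?_ hodd
  have hlast := (tendsto_term_altSign hs).comp (tendsto_id.const_mul_atTop' two_pos)
  simpa [sum_range_succ] using hodd.sub hlast

theorem pairedEtaSeries_eq_dirichletEta {s : ℂ} (hs : 0 < s.re) :
    pairedEtaSeries s = dirichletEta s := by
  have heq : pairedEtaSeries =ᶠ[𝓝 2] dirichletEta := by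
    filter_upwards [(isOpen_lt continuous_const continuous_re).mem_nhds
      (show (1 : ℝ) < (2 : ℂ).re by norm_num)] with z (hz : 1 < z.re)
    exact tendsto_nhds_unique (tendsto_sum_range_term_altSign_pairedEtaSeries (by linarith))
      (tendsto_sum_range_term_altSign_of_one_lt_re hz)
  exact (differentiableOn_pairedEtaSeries.analyticOnNhd
    (isOpen_lt continuous_const continuous_re)).eqOn_of_preconnected_of_eventuallyEq
    (fun z _ ↦ differentiable_dirichletEta.analyticAt z) (convex_halfSpace_re_gt 0).isPreconnected
    (by norm_num : (2 : ℂ) ∈ {s : ℂ | 0 < s.re}) heq hs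

theorem tendsto_sum_range_term_altSign {s : ℂ} (hs : 0 < s.re) :
    Tendsto (fun n ↦ ∑ k ∈ range n, term altSign s k) atTop (𝓝 (dirichletEta s)) :=
  pairedEtaSeries_eq_dirichletEta hs ▸ tendsto_sum_range_term_altSign_pairedEtaSeries hs

theorem ofReal_cpow_neg_mul_I_mul_term_altSign {a : ℝ} (ha : 0 < a) (x y : ℝ) {k : ℕ}
    (hk : k ≠ 0) : (a : ℂ) ^ (-(y * I)) * term altSign (x + y * I) k =
      (((-1) ^ (k - 1) * (k : ℝ) ^ (-x) : ℝ) : ℂ) *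
        exp ((-(y * Real.log (a * k)) : ℝ) * I) := by
  have hk0 : (0 : ℝ) < k := by positivity
  have hsign : altSign k = (-1) ^ (k - 1) := by
    obtain ⟨k, rfl⟩ := Nat.exists_eq_add_one_of_ne_zero hk
    simp [altSign, pow_succ]
  rw [← ofReal_cpow_neg_mul_I (by positivity), ofReal_mul a, mul_cpow_ofReal_nonneg ha.le hk0.le,
    term_of_ne_zero hk, div_eq_mul_inv, ← cpow_neg, neg_add, cpow_add _ _ (by simp [hk]),
    ofReal_mul, ofReal_cpow hk0.le, hsign]
  push_cast
  ring

theorem stmt_1_general (x y : ℝ) (hx0 : 0 < x)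
    (hz : riemannZeta ((x : ℂ) + (y : ℂ) * Complex.I) = 0) :
    (∀ a : ℝ, 0 < a →
      Tendsto (fun n : ℕ => ∑ k ∈ Finset.Icc 1 n,
          (-1 : ℝ) ^ (k - 1) * (k : ℝ) ^ (-x) * Real.cos (y * Real.log (a * k)))
        atTop (nhds 0)) ∧
    (∀ b : ℝ, 0 < b →
      Tendsto (fun n : ℕ => ∑ k ∈ Finset.Icc 1 n,
          (-1 : ℝ) ^ (k - 1) * (k : ℝ) ^ (-x) * Real.sin (y * Real.log (b * k)))
        atTop (nhds 0)) := by
  have hs1 : (x : ℂ) + y * I ≠ 1 := fun h ↦ riemannZeta_one_ne_zero (h ▸ hz)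
  have hη : Tendsto (fun n ↦ ∑ k ∈ Icc 1 n, term altSign (x + y * I) k) atTop (𝓝 0) := by
    have := (tendsto_add_atTop_iff_nat 1).mpr
      (tendsto_sum_range_term_altSign (s := x + y * I) (by simpa using hx0))
    simpa only [sum_range_succ_term_eq_sum_Icc, dirichletEta_eq_mul_riemannZeta hs1, hz,
      mul_zero] using this
  have hrotated (c : ℝ) (hc : 0 < c) : Tendsto (fun n : ℕ ↦ ∑ k ∈ Icc 1 n,
      (((-1) ^ (k - 1) * (k : ℝ) ^ (-x) : ℝ) : ℂ) * exp ((-(y * Real.log (c * k)) : ℝ) * I))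
      atTop (𝓝 0) := by
    have := hη.const_mul ((c : ℂ) ^ (-(y * I)))
    rw [mul_zero] at this
    refine this.congr fun n ↦ ?_
    rw [mul_sum]
    exact sum_congr rfl fun k hk ↦
      ofReal_cpow_neg_mul_I_mul_term_altSign hc x y
        (Nat.one_le_iff_ne_zero.mp (mem_Icc.mp hk).1)
  refine ⟨fun a ha ↦ ?_, fun b hb ↦ ?_⟩
  · simpa only [Function.comp_def, re_sum, re_ofReal_mul, exp_ofReal_mul_I_re, Real.cos_neg,
      zero_re] using (continuous_re.tendsto 0).comp (hrotated a ha)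
  · simpa only [Function.comp_def, im_sum, im_ofReal_mul, exp_ofReal_mul_I_im, Real.sin_neg,
      mul_neg, sum_neg_distrib, neg_neg, zero_im, neg_zero] using
      ((continuous_im.tendsto 0).comp (hrotated b hb)).neg

theorem stmt_1 (x y : ℝ) (hx0 : 0 < x) (hx1 : x < 1)
    (hz : riemannZeta ((x : ℂ) + (y : ℂ) * Complex.I) = 0) :
    (∀ a : ℝ, 0 < a →
      Tendsto (fun n : ℕ => ∑ k ∈ Finset.Icc 1 n,
          (-1 : ℝ) ^ (k - 1) * (k : ℝ) ^ (-x) * Real.cos (y * Real.log (a * k)))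
        atTop (nhds 0)) ∧
    (∀ b : ℝ, 0 < b →
      Tendsto (fun n : ℕ => ∑ k ∈ Finset.Icc 1 n,
          (-1 : ℝ) ^ (k - 1) * (k : ℝ) ^ (-x) * Real.sin (y * Real.log (b * k)))
        atTop (nhds 0)) :=
  stmt_1_general x y hx0 hz
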